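/- (SqPO concurrency, synthesis, for rules without conditions.) Let C be an adhesive, balanced category with epi–mono factorizations, effective unions, a strict initial object whose morphisms out of it are monomorphisms, and in which every composable pair of monomorphisms admits a final pullback complement. Let r₁ = (O₁ ⟵o₁ K₁ ⟶i₁ I₁) and r₂ = (O₂ ⟵o₂ K₂ ⟶i₂ I₂) be linear rules. Suppose given SqPO derivations: X₁ = r₁ applied to X₀ at a monomorphism m₁ : I₁ ⟶ X₀, with comatch m₁* : O₁ ⟶ X₁, and X₂ = r₂ applied to X₁ at a monomorphism m₂ : I₂ ⟶ X₁. Let M₂₁ be a pullback of the cospan (m₂ : I₂ ⟶ X₁, m₁* : O₁ ⟶ X₁), giving a span of monomorphisms μ₂₁ = (I₂ ⟵ M₂₁ ⟶ O₁). Then: (i) the SqPO-composite rule r₂₁ = r₂ ▷μ₂₁◁ r₁ exists (in particular, the pushout complement required in its construction exists); and (ii) there exists a monomorphism m₂₁ : I₂₁ ⟶ X₀ such that the SqPO derivation of X₀ along r₂₁ at m₂₁ produces an object isomorphic to X₂. -/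

import Mathlib

/-!
The composite is built inside `X₁`. The pushout `N₂₁` of `μ₂₁` is the union of the subobjects
`m₂` and `m₁*` of `X₁` (adhesive categories have effective unions), and both derivations restrict
to it: pulling the second FPC back along `N₂₁ ↪ X₁` gives the FPC of step (ii), and pulling the
first pushout back along `N₂₁ ↪ X₁` gives the pushout complement of step (iv) (van Kampen).

The match `m₂₁ : I₂₁ ↪ X₀` is induced by the pushout `I₂₁`, and its FPC is a composite of two
FPCs: the first FPC transported along the pushout `I₂₁`, and the base change along
`K̄₁ ↪ X₁` of the FPC square `(K₂' ↪ N₂₁, K₂' ↪ K̄₂)` over `X₁`; the complement is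
`K̄₁ ×_{X₁} K̄₂`. Since `X₁ = O₁ ∪ K̄₁` and `O₁ ⊆ N₂₁`, the object `K̄₂` is the union of its
intersections with `N₂₁` and with `K̄₁`, so the left half of the rewriting square is a pushout;
pasting it with the pushout of the second derivation produces `X₂` itself.
-/

open CategoryTheory CategoryTheory.Limits

universe v u

/-- Given morphisms `a : A ⟶ B` and `c : B ⟶ C`, the pair `(d : D ⟶ C, b : A ⟶ D)` is a
*final pullback complement* of `(c, a)` if the square `a ≫ c = b ≫ d` is a pullback and
for every pullback square `x ≫ c = y ≫ z` and every `w : P ⟶ A` with `w ≫ a = x`,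
there is a unique `w* : Q ⟶ D` with `w* ≫ d = z` and `y ≫ w* = w ≫ b`. -/
structure IsFinalPullbackComplement {𝒞 : Type u} [Category.{v} 𝒞] {A B C D : 𝒞}
    (a : A ⟶ B) (c : B ⟶ C) (b : A ⟶ D) (d : D ⟶ C) : Prop where
  isPullback : CategoryTheory.IsPullback a b c d
  universal : ∀ {P Q : 𝒞} (x : P ⟶ B) (y : P ⟶ Q) (z : Q ⟶ C),
    CategoryTheory.IsPullback x y c z → ∀ (w : P ⟶ A), w ≫ a = x →
      ∃! wStar : Q ⟶ D, wStar ≫ d = z ∧ y ≫ wStar = w ≫ b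

/-- A category has *epi–mono factorizations* if every morphism factors as an epimorphism
followed by a monomorphism. -/
def HasEpiMonoFactorizations (𝒞 : Type u) [Category.{v} 𝒞] : Prop :=
  ∀ {X Y : 𝒞} (f : X ⟶ Y), ∃ (E : 𝒞) (e : X ⟶ E) (m : E ⟶ Y), Epi e ∧ Mono m ∧ e ≫ m = f

/-- A category has *effective unions* if for every pushout square of monomorphisms
and all monomorphisms `b`, `c` forming with the span legs a pullback square, the unique
mediating morphism out of the pushout is a monomorphism. -/
def HasEffectiveUnions (𝒞 : Type u) [Category.{v} 𝒞] : Prop :=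
  ∀ {A B C D E : 𝒞} (b₀ : A ⟶ B) (c₀ : A ⟶ C) (e : B ⟶ D) (f : C ⟶ D)
    (b : B ⟶ E) (c : C ⟶ E) (d : D ⟶ E),
    Mono b₀ → Mono c₀ → Mono e → Mono f → Mono b → Mono c →
    IsPushout b₀ c₀ e f → IsPullback b₀ c₀ b c →
    e ≫ d = b → f ≫ d = c → Mono d

namespace IsFinalPullbackComplement

variable {𝒞 : Type u} [Category.{v} 𝒞]

theorem of_isPullback_of_mono {A B C D : 𝒞} {a : A ⟶ B} {c : B ⟶ C} {b : A ⟶ D} {d : D ⟶ C}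
    [Mono d] (hpb : IsPullback a b c d)
    (hlift : ∀ {P Q : 𝒞} (x : P ⟶ B) (y : P ⟶ Q) (z : Q ⟶ C), IsPullback x y c z →
      ∀ w : P ⟶ A, w ≫ a = x → ∃ z' : Q ⟶ D, z' ≫ d = z) :
    IsFinalPullbackComplement a c b d where
  isPullback := hpb
  universal x y z hsq w hw := by
    obtain ⟨z', hz'⟩ := hlift x y z hsq w hw
    refine ⟨z', ⟨hz', ?_⟩, fun v hv => by rw [← cancel_mono d, hv.1, hz']⟩
    rw [← cancel_mono d, Category.assoc, hz', ← hsq.w, ← hw, Category.assoc, hpb.w,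
      Category.assoc]

theorem mono_of_mono [Adhesive 𝒞] {A B C D : 𝒞} {a : A ⟶ B} {c : B ⟶ C} {b : A ⟶ D}
    {d : D ⟶ C} [Mono a] [Mono c] (h : IsFinalPullbackComplement a c b d) : Mono d where
  right_cancellation {T} u v huv := by
    have hsq := IsPullback.of_hasPullback c (u ≫ d)
    let w := h.isPullback.lift (pullback.fst c (u ≫ d)) (pullback.snd c (u ≫ d) ≫ u)
      (by simpa using hsq.w)
    obtain ⟨_, _, huniq⟩ := h.universal _ _ _ hsq w (by simp [w])
    have hv : h.isPullback.lift (pullback.fst c (u ≫ d)) (pullback.snd c (u ≫ d) ≫ v)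
        (by simpa [huv] using hsq.w) = w := by
      simp [← cancel_mono a, w]
    exact (huniq u ⟨rfl, by simp [w]⟩).trans
      (huniq v ⟨huv.symm, by rw [← hv, IsPullback.lift_snd]⟩).symm

theorem comp {A' A B C D D' : 𝒞} {a' : A' ⟶ A} {a : A ⟶ B} {c : B ⟶ C} {b : A ⟶ D}
    {d : D ⟶ C} {b' : A' ⟶ D'} {d' : D' ⟶ D} (h : IsFinalPullbackComplement a c b d)
    (h' : IsFinalPullbackComplement a' b b' d') :
    IsFinalPullbackComplement (a' ≫ a) c b' (d' ≫ d) where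
  isPullback := h'.isPullback.paste_horiz h.isPullback
  universal x y z hsq w hw := by
    obtain ⟨ω, ⟨hωd, hωy⟩, hω⟩ := h.universal x y z hsq (w ≫ a') (by simpa using hw)
    have hmid : IsPullback (w ≫ a') y b ω :=
      (IsPullback.of_bot (by simpa [hωd, hw] using hsq.flip) hωy h.isPullback.flip).flip
    obtain ⟨ω', ⟨hω'd, hω'y⟩, hω'⟩ := h'.universal _ y ω hmid w rfl
    refine ⟨ω', ⟨by rw [← Category.assoc, hω'd, hωd], hω'y⟩, fun v ⟨hvd, hvy⟩ => hω' v ⟨?_, hvy⟩⟩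
    refine hω _ ⟨by rwa [Category.assoc], ?_⟩
    rw [← Category.assoc, hvy, Category.assoc, ← h'.isPullback.w, Category.assoc]

theorem baseChange {A B C D A' B' C' D' : 𝒞} {a : A ⟶ B} {c : B ⟶ C} {b : A ⟶ D} {d : D ⟶ C}
    (h : IsFinalPullbackComplement a c b d) {a' : A' ⟶ B'} {c' : B' ⟶ C'} {b' : A' ⟶ D'}
    {d' : D' ⟶ C'} {fA : A' ⟶ A} {fB : B' ⟶ B} {fC : C' ⟶ C} {fD : D' ⟶ D}
    (hA : IsPullback fA a' a fB) (hB : IsPullback fB c' c fC) (hD : IsPullback fD d' d fC)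
    (hb : b' ≫ fD = fA ≫ b) (hw : a' ≫ c' = b' ≫ d') :
    IsFinalPullbackComplement a' c' b' d' where
  isPullback := by
    refine (IsPullback.of_right ?_ hw.symm hD).flip
    rw [hb, ← hB.w]
    exact hA.paste_horiz h.isPullback.flip
  universal x y z hsq w hw' := by
    obtain ⟨ω, ⟨hωd, hωy⟩, hω⟩ := h.universal _ y _ (hsq.paste_horiz hB) (w ≫ fA)
      (by rw [Category.assoc, hA.w, ← hw', Category.assoc])
    refine ⟨hD.lift ω z hωd, ⟨hD.lift_snd _ _ _, hD.hom_ext ?_ ?_⟩, fun v ⟨hvd, hvy⟩ => ?_⟩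
    · simp [hωy, hb]
    · simp [← hsq.w, ← hw', hw]
    refine hD.hom_ext ((hω _ ⟨?_, ?_⟩).trans (hD.lift_fst _ _ _).symm) (by simpa using hvd)
    · rw [Category.assoc, hD.w, ← Category.assoc, hvd]
    · rw [← Category.assoc, hvy, Category.assoc, hb, Category.assoc]

theorem of_comp_of_isPullback [Adhesive 𝒞] {K I N X K' D : 𝒞} {i : K ⟶ I} {m : I ⟶ N}
    {n : N ⟶ X} {κ : K ⟶ K'} {ν : K' ⟶ N} {t : K' ⟶ D} {d : D ⟶ X} [Mono m] [Mono n] [Mono d]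
    (h : IsFinalPullbackComplement i (m ≫ n) (κ ≫ t) d) (hl : IsPullback i κ m ν)
    (hr : IsPullback ν t n d) : IsFinalPullbackComplement ν n t d := by
  refine of_isPullback_of_mono hr fun x y z hsq w hw => ?_
  have hP := IsPullback.of_hasPullback (m ≫ n) z
  let ℓ := hsq.lift (pullback.fst (m ≫ n) z ≫ m) (pullback.snd (m ≫ n) z) (by simpa using hP.w)
  let w₂ := hl.lift (pullback.fst (m ≫ n) z) (ℓ ≫ w) (by simp [hw, ℓ])
  obtain ⟨ω, ⟨hω, -⟩, -⟩ := h.universal _ _ z hP w₂ (hl.lift_fst _ _ _)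
  exact ⟨ω, hω⟩

end IsFinalPullbackComplement

namespace CategoryTheory.Adhesive

variable {𝒞 : Type u} [Category.{v} 𝒞] [Adhesive 𝒞]

/-- Adhesive categories have effective unions (Lack–Sobociński, Theorem 5.1). -/
theorem mono_of_isPushout_of_isPullback {A B C D E : 𝒞} {b₀ : A ⟶ B} {c₀ : A ⟶ C}
    {e : B ⟶ D} {f : C ⟶ D} {b : B ⟶ E} {c : C ⟶ E} {d : D ⟶ E} [Mono b] [Mono c]
    (hpo : IsPushout b₀ c₀ e f) (hpb : IsPullback b₀ c₀ b c) (he : e ≫ d = b)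
    (hf : f ≫ d = c) : Mono d := by
  have hpo' : IsPushout (pullback.fst b c) (pullback.snd b c) e f :=
    hpo.of_iso hpb.isoPullback (Iso.refl _) (Iso.refl _) (Iso.refl _) (by simp) (by simp)
      (by simp) (by simp)
  have : d = hpo'.isoPushout.hom ≫ pushout.desc b c pullback.condition :=
    hpo'.hom_ext (by simpa [he] using (pushout.inl_desc _ _ _).symm)
      (by simpa [hf] using (pushout.inr_desc _ _ _).symm)
  rw [this]
  infer_instance

theorem exists_isPushout_mono_of_isPullback {M I O X : 𝒞} {s₂ : M ⟶ I} {s₁ : M ⟶ O}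
    {m₂ : I ⟶ X} {m₁ : O ⟶ X} [Mono m₂] [Mono m₁] (h : IsPullback s₂ s₁ m₂ m₁) :
    ∃ (N : 𝒞) (m₂' : I ⟶ N) (m₁' : O ⟶ N) (n : N ⟶ X),
      IsPushout s₂ s₁ m₂' m₁' ∧ Mono n ∧ m₂' ≫ n = m₂ ∧ m₁' ≫ n = m₁ := by
  have : Mono s₂ := h.mono_fst_of_mono
  have hN := IsPushout.of_hasPushout s₂ s₁
  exact ⟨_, _, _, hN.desc m₂ m₁ h.w, hN,
    mono_of_isPushout_of_isPullback hN h (hN.inl_desc _ _ _) (hN.inr_desc _ _ _),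
    hN.inl_desc _ _ _, hN.inr_desc _ _ _⟩

theorem isPushout_of_isPullback_of_jointlyEpi {A B C D : 𝒞} {f : A ⟶ B} {g : A ⟶ C}
    {h : B ⟶ D} {k : C ⟶ D} [Mono h] [Mono k] (hpb : IsPullback f g h k)
    (hepi : ∀ {T : 𝒞} (φ ψ : D ⟶ T), h ≫ φ = h ≫ ψ → k ≫ φ = k ≫ ψ → φ = ψ) :
    IsPushout f g h k := by
  have : Mono f := hpb.mono_fst_of_mono
  have hZ := IsPushout.of_hasPushout f g
  have : Mono (hZ.desc h k hpb.w) :=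
    mono_of_isPushout_of_isPullback hZ hpb (hZ.inl_desc _ _ _) (hZ.inr_desc _ _ _)
  have : Epi (hZ.desc h k hpb.w) :=
    ⟨fun φ ψ hφψ => hepi φ ψ (by simpa using pushout.inl f g ≫= hφψ)
      (by simpa using pushout.inr f g ≫= hφψ)⟩
  have : IsIso (hZ.desc h k hpb.w) := isIso_of_mono_of_epi _
  exact hZ.of_iso (Iso.refl _) (Iso.refl _) (Iso.refl _) (asIso (hZ.desc h k hpb.w))
    (by simp) (by simp) (by simp) (by simp)

theorem isPullback_of_isPushout_of_isPullback_comp {W X Y Z K V : 𝒞} {κ : W ⟶ X}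
    {i : W ⟶ Y} {j : X ⟶ Z} {p : Y ⟶ Z} {u : X ⟶ K} {i' : K ⟶ V} {m : Z ⟶ V} [Mono κ] [Mono i]
    [Mono i'] (hpo : IsPushout κ i j p) (hw : j ≫ m = u ≫ i')
    (houter : IsPullback (κ ≫ u) i i' (p ≫ m)) : IsPullback j u m i' := by
  have : Mono j := mono_of_isPushout_of_mono_right hpo
  have : Mono p := mono_of_isPushout_of_mono_left hpo
  obtain ⟨P, πK, πZ, hP⟩ : ∃ (P : 𝒞) (πK : P ⟶ K) (πZ : P ⟶ Z), IsPullback πK πZ i' m :=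
    ⟨_, _, _, .of_hasPullback i' m⟩
  obtain ⟨PX, xX, xP, hX⟩ : ∃ (PX : 𝒞) (xX : PX ⟶ X) (xP : PX ⟶ P), IsPullback xX xP j πZ :=
    ⟨_, _, _, .of_hasPullback j πZ⟩
  obtain ⟨PY, yY, yP, hY⟩ : ∃ (PY : 𝒞) (yY : PY ⟶ Y) (yP : PY ⟶ P), IsPullback yY yP p πZ :=
    ⟨_, _, _, .of_hasPullback p πZ⟩
  -- `c` is epi since both legs of the pullback of `hpo` along `πZ` factor through it
  have hc₁ := hP.lift_fst u j hw.symm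
  have hc₂ := hP.lift_snd u j hw.symm
  set c := hP.lift u j hw.symm
  have : Mono c := mono_of_mono_fac hc₂
  have hXc : xX ≫ c = xP := by
    refine hP.hom_ext ?_ (by rw [Category.assoc, hc₂, hX.w])
    rw [← cancel_mono i']
    simp only [Category.assoc, hc₁, ← hw, hX.w_assoc, hP.w]
  have hσ : (yP ≫ πK) ≫ i' = yY ≫ p ≫ m := by rw [Category.assoc, hP.w, hY.w_assoc]
  have hYc : houter.lift _ _ hσ ≫ κ ≫ c = yP := by
    refine hP.hom_ext ?_ ?_
    · rw [Category.assoc, Category.assoc, hc₁, houter.lift_fst]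
    · rw [Category.assoc, Category.assoc, hc₂, hpo.w, ← Category.assoc, houter.lift_snd, hY.w]
  have : Epi c := ⟨fun φ ψ hφψ => isPushout_isPullback_isPullback_hom_ext hpo hX.flip hY.flip
    (by rw [← hXc, Category.assoc, hφψ, Category.assoc])
    (by rw [← hYc, Category.assoc, Category.assoc, hφψ, Category.assoc, Category.assoc])⟩
  have : IsIso c := isIso_of_mono_of_epi c
  exact (hP.of_iso' (asIso c) (Iso.refl _) (Iso.refl _) (Iso.refl _) (by simp [hc₁])
    (by simp [hc₂]) (by simp) (by simp)).flip

theorem isPushout_of_isPullback_of_factor {K O Kb X N K' : 𝒞} {o : K ⟶ O} {k : K ⟶ Kb}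
    {m : O ⟶ X} {o' : Kb ⟶ X} [Mono o] (hpo : IsPushout o k m o') {n : N ⟶ X} [Mono n]
    {m' : O ⟶ N} (hm : m' ≫ n = m) {u : K' ⟶ Kb} {ν : K' ⟶ N} (hpb : IsPullback u ν o' n)
    {κ : K ⟶ K'} (hκu : κ ≫ u = k) (hκν : κ ≫ ν = o ≫ m') : IsPushout o κ m' ν :=
  have : Mono u := hpb.mono_fst_of_mono
  ((van_kampen hpo) o κ m' ν (𝟙 K) (𝟙 O) u n (IsPullback.id_vert o)
    (IsPullback.of_vert_isIso_mono ⟨by simp [hκu]⟩) ⟨by simp [hm]⟩ hpb.flip.toCommSq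
    ⟨hκν.symm⟩).2 ⟨IsPullback.of_vert_isIso_mono ⟨by simp [hm]⟩, hpb.flip⟩

theorem isPushout_of_isPullback_of_covering {K O Kb X N D A B C : 𝒞} {o : K ⟶ O}
    {k : K ⟶ Kb} {m : O ⟶ X} {o' : Kb ⟶ X} [Mono o] (hpo : IsPushout o k m o') {n : N ⟶ X}
    [Mono n] {m' : O ⟶ N} (hm : m' ≫ n = m) {i : D ⟶ X} [Mono i] {t : A ⟶ D} {ν : A ⟶ N}
    (ht : IsPullback t ν i n) {a : B ⟶ Kb} {b : B ⟶ D} (hb : IsPullback a b o' i)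
    {q : C ⟶ A} {c : C ⟶ B} (hpb : IsPullback q c t b) : IsPushout q c t b := by
  have : Mono o' := mono_of_isPushout_of_mono_left hpo
  have : Mono t := ht.mono_fst_of_mono
  have : Mono b := hb.mono_snd_of_mono
  refine isPushout_of_isPullback_of_jointlyEpi hpb fun φ ψ htφ hbφ => ?_
  -- pulling `hpo` back along `i` covers `D` by `B` and by `P = O ×_X D`, and `P` factors
  -- through `t` because `O ⊆ N`
  obtain ⟨P, πD, πO, hP⟩ : ∃ (P : 𝒞) (πD : P ⟶ D) (πO : P ⟶ O), IsPullback πD πO i m :=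
    ⟨_, _, _, .of_hasPullback i m⟩
  obtain ⟨ℓ, hℓ⟩ : ∃ ℓ : P ⟶ A, ℓ ≫ t = πD :=
    ⟨_, ht.lift_fst πD (πO ≫ m') (by rw [Category.assoc, hm, hP.w])⟩
  refine isPushout_isPullback_isPullback_hom_ext hpo hP hb.flip ?_ hbφ
  rw [← hℓ, Category.assoc, htφ, Category.assoc]

end CategoryTheory.Adhesive

namespace IsFinalPullbackComplement

variable {𝒞 : Type u} [Category.{v} 𝒞] [Adhesive 𝒞]

theorem exists_factor {K I X Kb N : 𝒞} {i : K ⟶ I} {m : I ⟶ X} {k : K ⟶ Kb} {i' : Kb ⟶ X}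
    [Mono i] [Mono m] (h : IsFinalPullbackComplement i m k i') {m' : I ⟶ N} {n : N ⟶ X}
    [Mono n] (hm : m' ≫ n = m) :
    ∃ (K' : 𝒞) (κ : K ⟶ K') (ν : K' ⟶ N) (t : K' ⟶ Kb), IsPullback t ν i' n ∧ κ ≫ t = k ∧
      IsFinalPullbackComplement i m' κ ν ∧ IsFinalPullbackComplement ν n t i' := by
  have : Mono i' := h.mono_of_mono
  have : Mono m' := mono_of_mono_fac hm
  obtain ⟨K', t, ν, hK⟩ : ∃ (K' : 𝒞) (t : K' ⟶ Kb) (ν : K' ⟶ N), IsPullback t ν i' n :=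
    ⟨_, _, _, .of_hasPullback i' n⟩
  obtain ⟨κ, hκt, hκν⟩ := hK.exists_lift k (i ≫ m') (by rw [Category.assoc, hm, h.isPullback.w])
  have h' : IsFinalPullbackComplement i m' κ ν :=
    h.baseChange (fA := 𝟙 K) (fB := 𝟙 I) (.of_horiz_isIso ⟨by simp⟩)
      (.of_horiz_isIso_mono ⟨by simp [hm]⟩) hK (by simp [hκt]) hκν.symm
  refine ⟨K', κ, ν, t, hK, hκt, h', of_comp_of_isPullback ?_ h'.isPullback hK.flip⟩
  rwa [hκt, hm]

theorem exists_isPushout {K I X Kb K' : 𝒞} {i : K ⟶ I} {m : I ⟶ X} {k : K ⟶ Kb}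
    {i' : Kb ⟶ X} [Mono i] [Mono m] (h : IsFinalPullbackComplement i m k i') {κ : K ⟶ K'}
    {u : K' ⟶ Kb} [Mono u] (hκu : κ ≫ u = k) :
    ∃ (J : 𝒞) (j : K' ⟶ J) (p : I ⟶ J) (m' : J ⟶ X),
      IsPushout κ i j p ∧ Mono m' ∧ IsFinalPullbackComplement j m' u i' := by
  have : Mono k := h.isPullback.mono_snd_of_mono
  have : Mono κ := mono_of_mono_fac hκu
  have : Mono i' := h.mono_of_mono
  obtain ⟨J, j, p, hI⟩ : ∃ (J : 𝒞) (j : K' ⟶ J) (p : I ⟶ J), IsPushout κ i j p :=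
    ⟨_, _, _, .of_hasPushout κ i⟩
  have : Mono p := Adhesive.mono_of_isPushout_of_mono_left hI
  obtain ⟨m', hj, hp⟩ := hI.exists_desc (u ≫ i') m (by rw [← Category.assoc, hκu, h.isPullback.w])
  have hpb : IsPullback κ i (u ≫ i') m := by
    have top : IsPullback κ (𝟙 K) u k := .of_vert_isIso_mono ⟨by simp [hκu]⟩
    simpa using top.paste_vert h.isPullback.flip
  have hm' := Adhesive.mono_of_isPushout_of_isPullback hI hpb hj hp
  have houter : IsPullback (κ ≫ u) i i' (p ≫ m') := by
    rw [hκu, hp]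
    exact h.isPullback.flip
  have hfpc : IsFinalPullbackComplement i (p ≫ m') (κ ≫ u) i' := by
    rwa [hκu, hp]
  exact ⟨J, j, p, m', hI, hm', of_comp_of_isPullback hfpc
    (Adhesive.isPullback_of_isPushout_of_mono_left hI).flip
    (Adhesive.isPullback_of_isPushout_of_isPullback_comp hI hj houter)⟩

end IsFinalPullbackComplement

theorem sqpo_concurrency_synthesis_general {𝒞 : Type u} [Category.{v} 𝒞]
    [Adhesive 𝒞]
    -- the two linear rules
    {O₁ K₁ I₁ O₂ K₂ I₂ : 𝒞}
    (o₁ : K₁ ⟶ O₁) (i₁ : K₁ ⟶ I₁) [Mono o₁] [Mono i₁]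
    (o₂ : K₂ ⟶ O₂) (i₂ : K₂ ⟶ I₂) [Mono o₂] [Mono i₂]
    -- first SqPO derivation: X₀ ⟹[r₁, m₁] X₁, with comatch m₁*
    {X₀ X₁ Kbar₁ : 𝒞}
    (m₁ : I₁ ⟶ X₀) [Mono m₁]
    (k₁ : K₁ ⟶ Kbar₁) (i₁' : Kbar₁ ⟶ X₀)
    (hfpc₁ : IsFinalPullbackComplement i₁ m₁ k₁ i₁')
    (m₁star : O₁ ⟶ X₁) (o₁' : Kbar₁ ⟶ X₁)
    (hpo₁ : IsPushout o₁ k₁ m₁star o₁')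
    -- second SqPO derivation: X₁ ⟹[r₂, m₂] X₂
    {X₂ Kbar₂ : 𝒞}
    (m₂ : I₂ ⟶ X₁) [Mono m₂]
    (k₂ : K₂ ⟶ Kbar₂) (i₂' : Kbar₂ ⟶ X₁)
    (hfpc₂ : IsFinalPullbackComplement i₂ m₂ k₂ i₂')
    (m₂star : O₂ ⟶ X₂) (o₂' : Kbar₂ ⟶ X₂)
    (hpo₂ : IsPushout o₂ k₂ m₂star o₂')
    -- the span μ₂₁ = (I₂ ⟵s₂ M₂₁ ⟶s₁ O₁), a pullback of the cospan (m₂, m₁*)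
    {M₂₁ : 𝒞} (s₂ : M₂₁ ⟶ I₂) (s₁ : M₂₁ ⟶ O₁)
    (hμ : IsPullback s₂ s₁ m₂ m₁star) :
    -- (i) the SqPO composite rule r₂₁ = r₂ ▷μ₂₁◁ r₁ exists ...
    ∃ (N₂₁ : 𝒞) (m₂' : I₂ ⟶ N₂₁) (m₁' : O₁ ⟶ N₂₁),
      IsPushout s₂ s₁ m₂' m₁' ∧
    ∃ (K₂c : 𝒞) (κ₂ : K₂ ⟶ K₂c) (ν₂ : K₂c ⟶ N₂₁),
      IsFinalPullbackComplement i₂ m₂' κ₂ ν₂ ∧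
    ∃ (O₂₁ : 𝒞) (oc : O₂ ⟶ O₂₁) (kc : K₂c ⟶ O₂₁),
      IsPushout o₂ κ₂ oc kc ∧
    -- ... in particular the pushout complement of (o₁, m₁') exists ...
    ∃ (K₁c : 𝒞) (κ₁ : K₁ ⟶ K₁c) (ν₁ : K₁c ⟶ N₂₁),
      IsPushout o₁ κ₁ m₁' ν₁ ∧
    ∃ (I₂₁ : 𝒞) (j₁ : K₁c ⟶ I₂₁) (p₁ : I₁ ⟶ I₂₁),
      IsPushout κ₁ i₁ j₁ p₁ ∧
    ∃ (K₂₁ : 𝒞) (q₂ : K₂₁ ⟶ K₂c) (q₁ : K₂₁ ⟶ K₁c),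
      IsPullback q₂ q₁ ν₂ ν₁ ∧
    -- (ii) ... and there is a monomorphism m₂₁ : I₂₁ ⟶ X₀ such that the SqPO
    -- derivation of X₀ along r₂₁ = (O₂₁ ⟵ q₂≫kc K₂₁ ⟶ q₁≫j₁ I₂₁) at m₂₁ produces an
    -- object isomorphic to X₂
    ∃ (m₂₁ : I₂₁ ⟶ X₀), Mono m₂₁ ∧
    ∃ (Kbar : 𝒞) (kk : K₂₁ ⟶ Kbar) (ii : Kbar ⟶ X₀),
      IsFinalPullbackComplement (q₁ ≫ j₁) m₂₁ kk ii ∧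
    ∃ (X₂' : 𝒞) (mm : O₂₁ ⟶ X₂') (oo : Kbar ⟶ X₂'),
      IsPushout (q₂ ≫ kc) kk mm oo ∧ Nonempty (X₂' ≅ X₂) := by
  have : Mono k₁ := hfpc₁.isPullback.mono_snd_of_mono
  have : Mono m₁star := Adhesive.mono_of_isPushout_of_mono_right hpo₁
  have : Mono o₁' := Adhesive.mono_of_isPushout_of_mono_left hpo₁
  have : Mono i₂' := hfpc₂.mono_of_mono
  obtain ⟨N, m₂', m₁', n, hN, hn, hm₂, hm₁⟩ := Adhesive.exists_isPushout_mono_of_isPullback hμ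
  obtain ⟨K₂c, κ₂, ν₂, t₂, hK₂c, hκt₂, hfpc₂', hfpcN⟩ := hfpc₂.exists_factor hm₂
  have : Mono ν₂ := hK₂c.mono_snd_of_mono
  have hO := IsPushout.of_hasPushout o₂ κ₂
  obtain ⟨K₁c, u₁, ν₁, hK₁c⟩ : ∃ (K₁c : 𝒞) (u₁ : K₁c ⟶ Kbar₁) (ν₁ : K₁c ⟶ N),
    IsPullback u₁ ν₁ o₁' n := ⟨_, _, _, .of_hasPullback o₁' n⟩
  have : Mono u₁ := hK₁c.mono_fst_of_mono
  obtain ⟨κ₁, hκu₁, hκν₁⟩ := hK₁c.exists_lift k₁ (o₁ ≫ m₁') (by rw [Category.assoc, hm₁, hpo₁.w])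
  obtain ⟨I₂₁, j₁, p₁, m₂₁, hI, hm₂₁, hfpcI⟩ := hfpc₁.exists_isPushout hκu₁
  obtain ⟨K₂₁, q₂, q₁, hK₂₁⟩ : ∃ (K₂₁ : 𝒞) (q₂ : K₂₁ ⟶ K₂c) (q₁ : K₂₁ ⟶ K₁c),
    IsPullback q₂ q₁ ν₂ ν₁ := ⟨_, _, _, .of_hasPullback ν₂ ν₁⟩
  obtain ⟨Kbar, π₁, π₂, hKb⟩ : ∃ (Kbar : 𝒞) (π₁ : Kbar ⟶ Kbar₁) (π₂ : Kbar ⟶ Kbar₂),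
    IsPullback π₁ π₂ o₁' i₂' := ⟨_, _, _, .of_hasPullback o₁' i₂'⟩
  obtain ⟨kk, hkk₁, hkk₂⟩ := hKb.exists_lift (q₁ ≫ u₁) (q₂ ≫ t₂) (by
    simp only [Category.assoc, hK₁c.w, hK₂c.w, hK₂₁.w_assoc])
  have hleft : IsPushout q₂ kk t₂ π₂ := by
    refine Adhesive.isPushout_of_isPullback_of_covering hpo₁ hm₁ hK₂c hKb
      (IsPullback.of_right ?_ hkk₂ hKb).flip
    rw [hkk₁, hK₂c.w]
    exact hK₂₁.flip.paste_horiz hK₁c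
  have hright := IsPushout.of_left' (by rw [hκt₂]; exact hpo₂.flip) hO.flip
  exact ⟨N, m₂', m₁', hN, K₂c, κ₂, ν₂, hfpc₂', _, _, _, hO, K₁c, κ₁, ν₁,
    Adhesive.isPushout_of_isPullback_of_factor hpo₁ hm₁ hK₁c hκu₁ hκν₁, I₂₁, j₁, p₁, hI,
    K₂₁, q₂, q₁, hK₂₁, m₂₁, hm₂₁, Kbar, kk, π₁ ≫ i₁',
    hfpcI.comp (hfpcN.baseChange hK₂₁ hK₁c.flip hKb.flip hkk₂ hkk₁.symm),
    X₂, _, π₂ ≫ o₂', hleft.paste_horiz hright.flip, ⟨Iso.refl _⟩⟩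

/-- **SqPO concurrency theorem, synthesis direction (rules without conditions).**
In an adhesive, balanced category with epi–mono factorizations, effective unions, a
strict initial object whose outgoing morphisms are monomorphisms, and in which every
composable pair of monomorphisms admits a final pullback complement: given two linear
rules `r₁ = (O₁ ⟵o₁ K₁ ⟶i₁ I₁)`, `r₂ = (O₂ ⟵o₂ K₂ ⟶i₂ I₂)`, a two-step sequence of
SqPO derivations `X₀ ⟹[r₁,m₁] X₁ ⟹[r₂,m₂] X₂`, and `M₂₁` a pullback of the cospan
`(m₂, m₁*)`, the SqPO-composite rule `r₂₁ = r₂ ▷μ₂₁◁ r₁` exists (in particular the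
required pushout complement exists) and there is a monomorphism `m₂₁ : I₂₁ ⟶ X₀` such
that the SqPO derivation of `X₀` along `r₂₁` at `m₂₁` produces an object isomorphic
to `X₂`. -/
theorem sqpo_concurrency_synthesis {𝒞 : Type u} [Category.{v} 𝒞]
    [Adhesive 𝒞] [Balanced 𝒞] [HasInitial 𝒞] [HasStrictInitialObjects 𝒞]
    [InitialMonoClass 𝒞]
    (hfact : HasEpiMonoFactorizations 𝒞) (heu : HasEffectiveUnions 𝒞)
    (hFPC : ∀ {A B C : 𝒞} (a : A ⟶ B) (c : B ⟶ C), Mono a → Mono c →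
      ∃ (D : 𝒞) (b : A ⟶ D) (d : D ⟶ C), IsFinalPullbackComplement a c b d)
    -- the two linear rules
    {O₁ K₁ I₁ O₂ K₂ I₂ : 𝒞}
    (o₁ : K₁ ⟶ O₁) (i₁ : K₁ ⟶ I₁) [Mono o₁] [Mono i₁]
    (o₂ : K₂ ⟶ O₂) (i₂ : K₂ ⟶ I₂) [Mono o₂] [Mono i₂]
    -- first SqPO derivation: X₀ ⟹[r₁, m₁] X₁, with comatch m₁*
    {X₀ X₁ Kbar₁ : 𝒞}
    (m₁ : I₁ ⟶ X₀) [Mono m₁]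
    (k₁ : K₁ ⟶ Kbar₁) (i₁' : Kbar₁ ⟶ X₀)
    (hfpc₁ : IsFinalPullbackComplement i₁ m₁ k₁ i₁')
    (m₁star : O₁ ⟶ X₁) (o₁' : Kbar₁ ⟶ X₁)
    (hpo₁ : IsPushout o₁ k₁ m₁star o₁')
    -- second SqPO derivation: X₁ ⟹[r₂, m₂] X₂
    {X₂ Kbar₂ : 𝒞}
    (m₂ : I₂ ⟶ X₁) [Mono m₂]
    (k₂ : K₂ ⟶ Kbar₂) (i₂' : Kbar₂ ⟶ X₁)
    (hfpc₂ : IsFinalPullbackComplement i₂ m₂ k₂ i₂')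
    (m₂star : O₂ ⟶ X₂) (o₂' : Kbar₂ ⟶ X₂)
    (hpo₂ : IsPushout o₂ k₂ m₂star o₂')
    -- the span μ₂₁ = (I₂ ⟵s₂ M₂₁ ⟶s₁ O₁), a pullback of the cospan (m₂, m₁*)
    {M₂₁ : 𝒞} (s₂ : M₂₁ ⟶ I₂) (s₁ : M₂₁ ⟶ O₁)
    (hμ : IsPullback s₂ s₁ m₂ m₁star) :
    -- (i) the SqPO composite rule r₂₁ = r₂ ▷μ₂₁◁ r₁ exists ...
    ∃ (N₂₁ : 𝒞) (m₂' : I₂ ⟶ N₂₁) (m₁' : O₁ ⟶ N₂₁),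
      IsPushout s₂ s₁ m₂' m₁' ∧
    ∃ (K₂c : 𝒞) (κ₂ : K₂ ⟶ K₂c) (ν₂ : K₂c ⟶ N₂₁),
      IsFinalPullbackComplement i₂ m₂' κ₂ ν₂ ∧
    ∃ (O₂₁ : 𝒞) (oc : O₂ ⟶ O₂₁) (kc : K₂c ⟶ O₂₁),
      IsPushout o₂ κ₂ oc kc ∧
    -- ... in particular the pushout complement of (o₁, m₁') exists ...
    ∃ (K₁c : 𝒞) (κ₁ : K₁ ⟶ K₁c) (ν₁ : K₁c ⟶ N₂₁),
      IsPushout o₁ κ₁ m₁' ν₁ ∧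
    ∃ (I₂₁ : 𝒞) (j₁ : K₁c ⟶ I₂₁) (p₁ : I₁ ⟶ I₂₁),
      IsPushout κ₁ i₁ j₁ p₁ ∧
    ∃ (K₂₁ : 𝒞) (q₂ : K₂₁ ⟶ K₂c) (q₁ : K₂₁ ⟶ K₁c),
      IsPullback q₂ q₁ ν₂ ν₁ ∧
    -- (ii) ... and there is a monomorphism m₂₁ : I₂₁ ⟶ X₀ such that the SqPO
    -- derivation of X₀ along r₂₁ = (O₂₁ ⟵ q₂≫kc K₂₁ ⟶ q₁≫j₁ I₂₁) at m₂₁ produces an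
    -- object isomorphic to X₂
    ∃ (m₂₁ : I₂₁ ⟶ X₀), Mono m₂₁ ∧
    ∃ (Kbar : 𝒞) (kk : K₂₁ ⟶ Kbar) (ii : Kbar ⟶ X₀),
      IsFinalPullbackComplement (q₁ ≫ j₁) m₂₁ kk ii ∧
    ∃ (X₂' : 𝒞) (mm : O₂₁ ⟶ X₂') (oo : Kbar ⟶ X₂'),
      IsPushout (q₂ ≫ kc) kk mm oo ∧ Nonempty (X₂' ≅ X₂) :=
  sqpo_concurrency_synthesis_general o₁ i₁ o₂ i₂ m₁ k₁ i₁' hfpc₁ m₁star o₁' hpo₁ m₂ k₂ i₂' hfpc₂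
    m₂star o₂' hpo₂ s₂ s₁ hμ
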